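/- arXiv:0901.0852 — 3 statements merged into one kernel-verified Lean document; each statement's English description precedes it below -/
import Mathlib

section
/- Let (K, ≼) be an abstract elementary class, let I be a directed partial order, and suppose for each s ∈ I we have a model M_s ∈ K such that s ≤_I t implies M_s ≼ M_t. Then (1) for every s ∈ I, M_s ≼ ⋃{M_t : t ∈ I} and ⋃{M_t : t ∈ I} ∈ K; and (2) if N ∈ K and M_s ≼ N for every s ∈ I, then ⋃{M_s : s ∈ I} ≼ N. -/
open FirstOrder Cardinal Set

universe u

variable {L : FirstOrder.Language.{u, u}} {U : Type u} [L.Structure U]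

/-- The supremum (union) of an ordinal-indexed family of substructures over indices `< δ`. -/
def osup (f : Ordinal.{u} → L.Substructure U) (δ : Ordinal.{u}) : L.Substructure U :=
  ⨆ γ : {γ : Ordinal.{u} // γ < δ}, f γ.1

/-- An abstract elementary class whose models are substructures of an ambient
`L`-structure `U`. -/
structure AEC (L : FirstOrder.Language.{u, u}) (U : Type u) [L.Structure U] :
    Type (u + 1) where
  K : Set (L.Substructure U)
  strong : L.Substructure U → L.Substructure U → Prop
  strong_mem_left : ∀ {M N}, strong M N → M ∈ K
  strong_mem_right : ∀ {M N}, strong M N → N ∈ K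
  strong_le : ∀ {M N}, strong M N → M ≤ N
  strong_refl : ∀ {M}, M ∈ K → strong M M
  strong_trans : ∀ {M N P}, strong M N → strong N P → strong M P
  coherence : ∀ {M N P}, M ≤ N → strong M P → strong N P → strong M N
  iso_closed : ∀ {M N : L.Substructure U}, M ∈ K → Nonempty (↥M ≃[L] ↥N) → N ∈ K
  chain_closed : ∀ (δ : Ordinal.{u}) (f : Ordinal.{u} → L.Substructure U),
    Order.IsSuccLimit δ →
    (∀ α β, α ≤ β → β < δ → strong (f α) (f β)) →
    (∀ β, β < δ → Order.IsSuccLimit β → f β = osup f β) →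
    osup f δ ∈ K ∧ ∀ α, α < δ → strong (f α) (osup f δ)
  smooth : ∀ (δ : Ordinal.{u}) (f : Ordinal.{u} → L.Substructure U)
      (N : L.Substructure U), Order.IsSuccLimit δ →
    (∀ α β, α ≤ β → β < δ → strong (f α) (f β)) →
    (∀ β, β < δ → Order.IsSuccLimit β → f β = osup f β) →
    (∀ α, α < δ → strong (f α) N) →
    strong (osup f δ) N
  lst : Cardinal.{u}
  lst_prop : ∀ N ∈ K, ∀ A : Set U, A ⊆ (N : Set U) →
    ∃ M ∈ K, A ⊆ (M : Set U) ∧ strong M N ∧ #↥M ≤ lst + #↥A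

namespace AEC

variable (A : AEC L U)

/-- `g : U → U` restricts to a `≼`-embedding of `M` into `N`. -/
def IsEmbOn (M N : L.Substructure U) (g : U → U) : Prop :=
  ∃ (M' : L.Substructure U) (e : ↥M ≃[L] ↥M'),
    A.strong M' N ∧ ∀ x : M, g (x : U) = (e x : U)

/-- `M` embeds into `N` over `M₀` (i.e. fixing `M₀` pointwise). -/
def EmbedsOver (M₀ M N : L.Substructure U) : Prop :=
  ∃ g : U → U, A.IsEmbOn M N g ∧ ∀ x ∈ (M₀ : Set U), g x = x

/-- `M` embeds into `N` over `M₀`, sending `a` to `b`. -/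
def EmbedsOverPt (M₀ M N : L.Substructure U) (a b : U) : Prop :=
  ∃ g : U → U, A.IsEmbOn M N g ∧ (∀ x ∈ (M₀ : Set U), g x = x) ∧ g a = b

/-- One approximation step of equality of Galois types over `M₀`. -/
def TypeStep (M₀ : L.Substructure U) (p q : L.Substructure U × U) : Prop :=
  A.strong M₀ p.1 ∧ A.strong M₀ q.1 ∧ p.2 ∈ p.1 ∧ q.2 ∈ q.1 ∧
    ∃ N₂, A.strong q.1 N₂ ∧ A.EmbedsOverPt M₀ p.1 N₂ p.2 q.2

/-- Equality of Galois types over `M₀` (the transitive-symmetric closure of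
the one-step relation). -/
def TypeEq (M₀ : L.Substructure U) (p q : L.Substructure U × U) : Prop :=
  Relation.EqvGen (A.TypeStep M₀) p q

/-- `M` is saturated in `λ⁺` over `λ`: every Galois type over a `≼`-submodel of
`M` of cardinality `λ` is realized in `M`. -/
def SaturatedAbove (lam : Cardinal.{u}) (M : L.Substructure U) : Prop :=
  ∀ N, N ∈ A.K → #↥N = lam → A.strong N M →
    ∀ N₁ (a : U), A.strong N N₁ → a ∈ N₁ →
      ∃ b ∈ (M : Set U), A.TypeEq N (N₁, a) (M, b)

/-- `M` is model-homogeneous in `λ⁺` over `λ`. -/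
def HomogeneousAbove (lam : Cardinal.{u}) (M : L.Substructure U) : Prop :=
  ∀ N₁ N₂, N₁ ∈ A.K → #↥N₁ = lam → N₂ ∈ A.K → #↥N₂ = lam →
    A.strong N₁ M → A.strong N₁ N₂ → A.EmbedsOver N₁ N₂ M

/-- Amalgamation in `K_λ`. -/
def AmalgIn (lam : Cardinal.{u}) : Prop :=
  ∀ M₀ M₁ M₂ : L.Substructure U, #↥M₀ = lam → #↥M₁ = lam → #↥M₂ = lam →
    A.strong M₀ M₁ → A.strong M₀ M₂ →
    ∃ M₃, M₃ ∈ A.K ∧ #↥M₃ = lam ∧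
      A.EmbedsOver M₀ M₁ M₃ ∧ A.EmbedsOver M₀ M₂ M₃

/-- Joint embedding in `K_λ`. -/
def JEPIn (lam : Cardinal.{u}) : Prop :=
  ∀ M₁ M₂, M₁ ∈ A.K → #↥M₁ = lam → M₂ ∈ A.K → #↥M₂ = lam →
    ∃ M₃, M₃ ∈ A.K ∧ #↥M₃ = lam ∧
      A.EmbedsOver ⊥ M₁ M₃ ∧ A.EmbedsOver ⊥ M₂ M₃

end AEC

/-- `C` is a closed unbounded subset of the ordinal `δ`. -/
def IsClubIn (C : Set Ordinal.{u}) (δ : Ordinal.{u}) : Prop :=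
  (∀ β < δ, ∃ γ, β < γ ∧ γ < δ ∧ γ ∈ C) ∧
    ∀ β < δ, Order.IsSuccLimit β →
      (∀ γ < β, ∃ γ', γ < γ' ∧ γ' < β ∧ γ' ∈ C) → β ∈ C

/-- `S` is a stationary subset of the ordinal `δ`. -/
def IsStatIn (S : Set Ordinal.{u}) (δ : Ordinal.{u}) : Prop :=
  S ⊆ Set.Iio δ ∧ ∀ C, IsClubIn C δ → ∃ γ, γ ∈ S ∧ γ ∈ C

/-! Induction on `#I`. A countable directed order has a cofinal `ω`-sequence, so the union is
that of an `ω`-chain and the chain axioms apply. An uncountable `I` is the union of a continuous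
chain, of length `#I.ord`, of directed subsets of smaller cardinality; by induction the union
over each of them is a `≼`-supremum, so these unions form a continuous `≼`-chain, whose union is
that of the whole family. -/

section OpClosure

universe v

variable {α : Type v} (op : α → α → α)

def opClosureStep : ℕ → Set α → Set α
  | 0, S => S
  | n + 1, S => opClosureStep n S ∪ image2 op (opClosureStep n S) (opClosureStep n S)

def opClosure (S : Set α) : Set α := ⋃ n, opClosureStep op n S

variable {op}

theorem monotone_opClosureStep (S : Set α) : Monotone fun n => opClosureStep op n S :=
  monotone_nat_of_le_succ fun _ => subset_union_left

theorem opClosureStep_mono (n : ℕ) {S T : Set α} (h : S ⊆ T) :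
    opClosureStep op n S ⊆ opClosureStep op n T := by
  induction n with
  | zero => exact h
  | succ n ih => exact union_subset_union ih (image2_subset ih ih)

theorem subset_opClosure (S : Set α) : S ⊆ opClosure op S :=
  subset_iUnion (fun n => opClosureStep op n S) 0

theorem op_mem_opClosure {S : Set α} {x y : α} (hx : x ∈ opClosure op S)
    (hy : y ∈ opClosure op S) : op x y ∈ opClosure op S := by
  obtain ⟨m, hm⟩ := mem_iUnion.mp hx
  obtain ⟨n, hn⟩ := mem_iUnion.mp hy
  refine mem_iUnion.mpr ⟨max m n + 1, mem_union_right _ (mem_image2_of_mem ?_ ?_)⟩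
  · exact monotone_opClosureStep S (le_max_left m n) hm
  · exact monotone_opClosureStep S (le_max_right m n) hn

theorem opClosure_mono {S T : Set α} (h : S ⊆ T) : opClosure op S ⊆ opClosure op T :=
  iUnion_mono fun n => opClosureStep_mono n h

theorem opClosureStep_iUnion_subset {ι : Type*} {f : ι → Set α} (hf : Directed (· ⊆ ·) f)
    (n : ℕ) : opClosureStep op n (⋃ i, f i) ⊆ ⋃ i, opClosureStep op n (f i) := by
  induction n with
  | zero => exact subset_rfl
  | succ n ih =>
    rintro x (hx | ⟨a, ha, b, hb, rfl⟩)
    · obtain ⟨i, hi⟩ := mem_iUnion.mp (ih hx)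
      exact mem_iUnion.mpr ⟨i, mem_union_left _ hi⟩
    · obtain ⟨i, hi⟩ := mem_iUnion.mp (ih ha)
      obtain ⟨j, hj⟩ := mem_iUnion.mp (ih hb)
      obtain ⟨k, hik, hjk⟩ := hf i j
      exact mem_iUnion.mpr ⟨k, mem_union_right _
        (mem_image2_of_mem (opClosureStep_mono n hik hi) (opClosureStep_mono n hjk hj))⟩

theorem opClosure_iUnion_subset {ι : Type*} {f : ι → Set α} (hf : Directed (· ⊆ ·) f) :
    opClosure op (⋃ i, f i) ⊆ ⋃ i, opClosure op (f i) := by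
  intro x hx
  obtain ⟨n, hn⟩ := mem_iUnion.mp hx
  obtain ⟨i, hi⟩ := mem_iUnion.mp (opClosureStep_iUnion_subset hf n hn)
  exact mem_iUnion.mpr ⟨i, mem_iUnion.mpr ⟨n, hi⟩⟩

theorem mk_opClosureStep_le (n : ℕ) (S : Set α) : #(opClosureStep op n S) ≤ max ℵ₀ #S := by
  induction n with
  | zero => exact le_max_right _ _
  | succ n ih =>
    have hinf : ℵ₀ ≤ max ℵ₀ #S := le_max_left _ _
    calc #(opClosureStep op (n + 1) S)
        ≤ #(opClosureStep op n S) + #(opClosureStep op n S) * #(opClosureStep op n S) :=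
          (mk_union_le _ _).trans (add_le_add le_rfl mk_image2_le)
      _ ≤ max ℵ₀ #S + max ℵ₀ #S * max ℵ₀ #S := add_le_add ih (mul_le_mul' ih ih)
      _ = max ℵ₀ #S := by rw [mul_eq_self hinf, add_eq_self hinf]

theorem mk_opClosure_le (S : Set α) : #(opClosure op S) ≤ max ℵ₀ #S := by
  have hunion : opClosure op S = ⋃ n : ULift.{v} ℕ, opClosureStep op n.down S := by
    ext x
    simp [opClosure]
  calc #(opClosure op S)
      ≤ #(ULift.{v} ℕ) * ⨆ n : ULift.{v} ℕ, #(opClosureStep op n.down S) :=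
        hunion ▸ mk_iUnion_le _
    _ ≤ max ℵ₀ #S * max ℵ₀ #S :=
        mul_le_mul' ((mk_denumerable _).trans_le (le_max_left _ _))
          (ciSup_le' fun n => mk_opClosureStep_le n.down S)
    _ = max ℵ₀ #S := mul_eq_self (le_max_left _ _)

end OpClosure

theorem exists_surjOn_Iio_ord (ι : Type u) [Nonempty ι] :
    ∃ e : Ordinal.{u} → ι, SurjOn e (Iio (#ι).ord) univ := by
  obtain ⟨r, _, hr⟩ := exists_ord_eq ι
  exact ⟨Function.invFun (Ordinal.typein r), fun i _ => ⟨Ordinal.typein r i,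
    hr ▸ Ordinal.typein_lt_type r i,
    Function.leftInverse_invFun (Ordinal.typein_injective r) i⟩⟩

theorem mk_image_Iio_lt {ι : Type u} (e : Ordinal.{u} → ι) {β : Ordinal.{u}}
    (hβ : β < (#ι).ord) : #(e '' Iio β) < #ι := by
  have h := mk_image_le_lift (f := e) (s := Iio β)
  rw [mk_Iio_ordinal, lift_lift, lift_le] at h
  exact h.trans_lt (lt_ord.mp hβ)

namespace AEC

variable (A : AEC L U) {ι : Type*}

def IsStrongSup (M : ι → L.Substructure U) : Prop :=
  (∀ i, A.strong (M i) (⨆ i, M i)) ∧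
    ∀ N, (∀ i, A.strong (M i) N) → A.strong (⨆ i, M i) N

variable {A} {M : ι → L.Substructure U}

theorem isStrongSup_of_isTop [Preorder ι] (hM : ∀ i j, i ≤ j → A.strong (M i) (M j))
    {m : ι} (hm : IsTop m) : A.IsStrongSup M := by
  have hsup : ⨆ i, M i = M m :=
    le_antisymm (iSup_le fun i => A.strong_le (hM i m (hm i))) (le_iSup M m)
  rw [IsStrongSup, hsup]
  exact ⟨fun i => hM i m (hm i), fun N hN => hN m⟩

theorem isStrongSup_of_chain {δ : Ordinal.{u}} (hδ : Order.IsSuccLimit δ)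
    {f : Ordinal.{u} → L.Substructure U}
    (hf : ∀ α β, α ≤ β → β < δ → A.strong (f α) (f β))
    (hcont : ∀ β, β < δ → Order.IsSuccLimit β → f β = osup f β) :
    A.IsStrongSup fun γ : {γ : Ordinal.{u} // γ < δ} => f γ :=
  ⟨fun γ => (A.chain_closed δ f hδ hf hcont).2 γ γ.2,
    fun N hN => A.smooth δ f N hδ hf hcont fun α hα => hN ⟨α, hα⟩⟩

theorem isStrongSup_of_cover {J : Type*} (E : J → Set ι) (hcover : ∀ i, ∃ j, i ∈ E j)
    (hE : ∀ j, A.IsStrongSup fun i : E j => M i)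
    (hsup : A.IsStrongSup fun j => ⨆ i : E j, M i) : A.IsStrongSup M := by
  have hunion : ⨆ i, M i = ⨆ j, ⨆ i : E j, M i := by
    refine le_antisymm (iSup_le fun i => ?_) (iSup_le fun j => iSup_le fun i => le_iSup M i)
    obtain ⟨j, hj⟩ := hcover i
    exact le_iSup_of_le j (le_iSup_of_le ⟨i, hj⟩ le_rfl)
  rw [IsStrongSup, hunion]
  refine ⟨fun i => ?_, fun N hN => hsup.2 N fun j => (hE j).2 N fun i => hN i⟩
  obtain ⟨j, hj⟩ := hcover i
  exact A.strong_trans ((hE j).1 ⟨i, hj⟩) (hsup.1 j)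

/-- The unions over the pieces `E β` form a continuous `≼`-chain of length `δ`. -/
theorem isStrongSup_of_continuous_cover {δ : Ordinal.{u}} (hδ : Order.IsSuccLimit δ)
    (E : Ordinal.{u} → Set ι) (hmono : ∀ α β, α ≤ β → β < δ → E α ⊆ E β)
    (hcont : ∀ β, β < δ → Order.IsSuccLimit β → ∀ i ∈ E β, ∃ γ < β, i ∈ E γ)
    (hcover : ∀ i, ∃ β < δ, i ∈ E β)
    (hE : ∀ β, β < δ → A.IsStrongSup fun i : E β => M i) :
    A.IsStrongSup M := by
  set f : Ordinal.{u} → L.Substructure U := fun β => ⨆ i : E β, M i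
  have hchain : ∀ α β, α ≤ β → β < δ → A.strong (f α) (f β) :=
    fun α β hαβ hβ => (hE α (hαβ.trans_lt hβ)).2 (f β)
      fun i => (hE β hβ).1 ⟨i, hmono α β hαβ hβ i.2⟩
  have hfcont : ∀ β, β < δ → Order.IsSuccLimit β → f β = osup f β := by
    intro β hβ hlim
    refine le_antisymm (iSup_le fun i => ?_) (iSup_le fun γ => ?_)
    · obtain ⟨γ, hγ, hi⟩ := hcont β hβ hlim i i.2
      exact le_iSup_of_le (ι := {γ // γ < β}) ⟨γ, hγ⟩ (le_iSup_of_le ⟨i, hi⟩ le_rfl)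
    · exact iSup_le fun i => le_iSup_of_le ⟨i, hmono γ β γ.2.le hβ i.2⟩ le_rfl
  refine isStrongSup_of_cover (fun γ : {γ // γ < δ} => E γ) (fun i => ?_)
    (fun γ => hE γ γ.2) (isStrongSup_of_chain hδ hchain hfcont)
  obtain ⟨β, hβ, hi⟩ := hcover i
  exact ⟨⟨β, hβ⟩, hi⟩

theorem isStrongSup_of_countable [Preorder ι] [Nonempty ι] [IsDirectedOrder ι] [Countable ι]
    (hM : ∀ i j, i ≤ j → A.strong (M i) (M j)) : A.IsStrongSup M := by
  obtain ⟨t, ht, ht_top⟩ := Filter.exists_seq_monotone_tendsto_atTop_atTop ι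
  set E : Ordinal.{u} → Set ι := fun β => Iic (t (Ordinal.card β).toNat) with hE
  have hE_nat : ∀ n : ℕ, E n = Iic (t n) := by simp [hE]
  refine isStrongSup_of_continuous_cover Ordinal.isSuccLimit_omega0 E ?_ ?_ ?_ ?_
  · intro α β hαβ hβ
    obtain ⟨n, rfl⟩ := Ordinal.lt_omega0.mp hβ
    obtain ⟨m, rfl⟩ := Ordinal.lt_omega0.mp (hαβ.trans_lt hβ)
    rw [hE_nat, hE_nat]
    exact Iic_subset_Iic.mpr (ht (by exact_mod_cast hαβ))
  · exact fun β hβ hlim => absurd (Ordinal.omega0_le_of_isSuccLimit hlim) hβ.not_ge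
  · intro i
    obtain ⟨n, hn⟩ := Filter.tendsto_atTop_atTop.mp ht_top i
    exact ⟨n, Ordinal.natCast_lt_omega0 n, (hE_nat n).symm ▸ hn n le_rfl⟩
  · intro β hβ
    obtain ⟨n, rfl⟩ := Ordinal.lt_omega0.mp hβ
    rw [hE_nat]
    exact isStrongSup_of_isTop (fun i j h => hM i j h) (m := ⟨t n, le_rfl⟩) fun i => i.2

/-- `ι` is the union of a continuous chain of length `#ι.ord` of directed subsets of smaller
size: the closures, under a choice of upper bounds, of initial segments of an enumeration. -/
theorem isStrongSup_of_aleph0_lt {ι : Type u} [Preorder ι] [Nonempty ι] [IsDirectedOrder ι]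
    {M : ι → L.Substructure U} (hι : ℵ₀ < #ι)
    (ih : ∀ S : Set ι, #S < #ι → S.Nonempty → DirectedOn (· ≤ ·) S →
      A.IsStrongSup fun i : S => M i) :
    A.IsStrongSup M := by
  choose ub hub using exists_ge_ge (α := ι)
  obtain ⟨e, he⟩ := exists_surjOn_Iio_ord ι
  obtain ⟨i₀⟩ := ‹Nonempty ι›
  set AS : Ordinal.{u} → Set ι := fun β => insert i₀ (e '' Iio β)
  have hAS_mono : Monotone AS := fun α β h =>
    insert_subset_insert (image_mono (Iio_subset_Iio h))
  have hlim : Order.IsSuccLimit (#ι).ord := isSuccLimit_ord hι.le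
  refine isStrongSup_of_continuous_cover hlim (fun β => opClosure ub (AS β))
    (fun α β h _ => opClosure_mono (hAS_mono h)) ?_ ?_ ?_
  · intro β _ hlimβ i hi
    have hAS_sub : AS β ⊆ ⋃ γ : Iio β, AS γ := by
      rintro x (rfl | ⟨γ, hγ, rfl⟩)
      · exact mem_iUnion.mpr ⟨⟨0, hlimβ.bot_lt⟩, mem_insert _ _⟩
      · exact mem_iUnion.mpr ⟨⟨Order.succ γ, hlimβ.succ_lt hγ⟩,
          mem_insert_of_mem _ ⟨γ, Order.lt_succ γ, rfl⟩⟩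
    have hdir : Directed (· ⊆ ·) fun γ : Iio β => AS γ :=
      (hAS_mono.comp (Subtype.mono_coe _)).directed_le
    obtain ⟨⟨γ, hγ⟩, hi⟩ :=
      mem_iUnion.mp (opClosure_iUnion_subset hdir (opClosure_mono hAS_sub hi))
    exact ⟨γ, hγ, hi⟩
  · intro i
    obtain ⟨γ, hγ, rfl⟩ := he (mem_univ i)
    exact ⟨Order.succ γ, hlim.succ_lt hγ,
      subset_opClosure _ (mem_insert_of_mem _ ⟨γ, Order.lt_succ γ, rfl⟩)⟩
  · intro β hβ
    refine ih _ ?_ ⟨i₀, subset_opClosure _ (mem_insert _ _)⟩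
      fun x hx y hy => ⟨ub x y, op_mem_opClosure hx hy, hub x y⟩
    have hAS_lt : #(AS β) < #ι :=
      mk_insert_le.trans_lt (add_lt_of_lt hι.le (mk_image_Iio_lt e hβ) (one_lt_aleph0.trans hι))
    exact (mk_opClosure_le _).trans_lt (max_lt hι hAS_lt)

theorem isStrongSup_of_directed {ι : Type u} [Preorder ι] [Nonempty ι] [IsDirectedOrder ι]
    (M : ι → L.Substructure U) (hM : ∀ i j, i ≤ j → A.strong (M i) (M j)) :
    A.IsStrongSup M := by
  rcases le_or_gt #ι ℵ₀ with hι | hι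
  · have : Countable ι := mk_le_aleph0_iff.mp hι
    exact isStrongSup_of_countable hM
  · refine isStrongSup_of_aleph0_lt hι fun S hS hne hdir => ?_
    have : Nonempty S := hne.to_subtype
    have : IsDirectedOrder S := hdir.isDirectedOrder
    exact isStrongSup_of_directed (fun i : S => M i) fun i j h => hM i j h
termination_by #ι

end AEC

/-- In an AEC, a `≼`-directed family of models has a union which is a
model of `K` extending every member, and the union is below any common `≼`-extension. -/
theorem directed_union_in_AEC (A : AEC L U) {I : Type u} [PartialOrder I] [Nonempty I]
    (hdir : ∀ s t : I, ∃ r, s ≤ r ∧ t ≤ r)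
    (M : I → L.Substructure U)
    (hmono : ∀ s t : I, s ≤ t → A.strong (M s) (M t)) :
    ((⨆ s, M s) ∈ A.K ∧ ∀ s : I, A.strong (M s) (⨆ s, M s)) ∧
      ∀ N : L.Substructure U, (∀ s : I, A.strong (M s) N) →
        A.strong (⨆ s, M s) N := by
  have : IsDirectedOrder I := ⟨hdir⟩
  obtain ⟨hupper, hleast⟩ := A.isStrongSup_of_directed M hmono
  exact ⟨⟨A.strong_mem_right (hupper (Classical.arbitrary I)), hupper⟩, hleast⟩
end

section
/- Let 𝔰 be a semi-good λ-frame except possibly local character. Define K^{3,bs} as the class of triples (M, N, a) with M, N ∈ K_λ, M ≼ N, a ∈ N − M and tp(a, M, N) ∈ S^bs(M), and define (M, N, a) ≼_bs (M*, N*, a*) iff M ≼ M*, N ≼ N*, a = a*, and tp(a, M*, N*) does not fork over M. Then (K^{3,bs}, ≼_bs) is an abstract elementary class in λ with no ≼_bs-maximal element. -/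
open FirstOrder Cardinal Set

universe u

variable {L : FirstOrder.Language.{u, u}} {U : Type u} [L.Structure U]

/-- A semi-good `λ`-frame except local character: an AEC with `LST ≤ λ`, amalgamation, joint embedding and no
maximal model in `K_λ`, together with basic types and a nonforking relation satisfying
density, weak basic stability, invariance, monotonicity, uniqueness,
symmetry, existence of nonforking extensions and continuity. -/
structure FrameNoLC (L : FirstOrder.Language.{u, u}) (U : Type u) [L.Structure U]
    extends AEC L U : Type (u + 1) where
  lam : Cardinal.{u}
  lam_inf : ℵ₀ ≤ lam
  lst_le : lst ≤ lam
  amalg : toAEC.AmalgIn lam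
  jep : toAEC.JEPIn lam
  no_max : ∀ M ∈ K, #↥M = lam → ∃ N, strong M N ∧ #↥N = lam ∧ M ≠ N
  /-- `Bs M N a` says that the Galois type `tp(a, M, N)` is basic. -/
  Bs : L.Substructure U → L.Substructure U → U → Prop
  bs_spec : ∀ {M N a}, Bs M N a →
    strong M N ∧ #↥M = lam ∧ #↥N = lam ∧ a ∈ N ∧ a ∉ M
  bs_inv : ∀ {M N a N' a'}, Bs M N a → toAEC.TypeEq M (N, a) (N', a') →
    strong M N' → a' ∈ N' → Bs M N' a'
  bs_density : ∀ M N, strong M N → #↥M = lam → #↥N = lam → M ≠ N →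
    ∃ a, a ∈ N ∧ a ∉ M ∧ Bs M N a
  bs_weak_stab : ∀ M ∈ K, #↥M = lam →
    ∃ T : Set (L.Substructure U × U), #↥T ≤ Order.succ lam ∧
      ∀ N a, Bs M N a → ∃ p ∈ T, toAEC.TypeEq M (N, a) p
  /-- `NFrel M₀ M₁ M₃ a` says that the type `tp(a, M₁, M₃)` does not fork over `M₀`. -/
  NFrel : L.Substructure U → L.Substructure U → L.Substructure U → U → Prop
  nf_spec : ∀ {M₀ M₁ M₃ a}, NFrel M₀ M₁ M₃ a →
    strong M₀ M₁ ∧ Bs M₀ M₃ a ∧ Bs M₁ M₃ a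
  nf_mono : ∀ {M₀ M₀' M₁' M₁ M₃ M₃'' M₃' a}, NFrel M₀ M₁ M₃ a →
    strong M₀ M₀' → strong M₀' M₁' → strong M₁' M₁ →
    strong M₃ M₃' → strong M₁' M₃'' → strong M₃'' M₃' → a ∈ M₃'' →
    NFrel M₀' M₁' M₃'' a
  nf_inv : ∀ {M₀ M₁ M₃ a M₃' a'}, NFrel M₀ M₁ M₃ a →
    toAEC.TypeEq M₁ (M₃, a) (M₃', a') → strong M₁ M₃' → a' ∈ M₃' →
    NFrel M₀ M₁ M₃' a'
  nf_unique : ∀ {M N N₁ N₂ a b}, NFrel M N N₁ a → NFrel M N N₂ b →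
    toAEC.TypeEq M (N₁, a) (N₂, b) → toAEC.TypeEq N (N₁, a) (N₂, b)
  nf_symm : ∀ {M₀ M₁ M₃ a₁ a₂}, strong M₀ M₁ → strong M₁ M₃ → a₁ ∈ M₁ →
    Bs M₀ M₃ a₁ → NFrel M₀ M₁ M₃ a₂ →
    ∃ M₂ M₃', a₂ ∈ M₂ ∧ strong M₀ M₂ ∧ strong M₂ M₃' ∧ strong M₃ M₃' ∧
      NFrel M₀ M₂ M₃' a₁
  nf_ext : ∀ {M N N' a}, Bs M N' a → strong M N → #↥N = lam → M ≠ N →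
    ∃ N'' b, NFrel M N N'' b ∧ toAEC.TypeEq M (N', a) (N'', b)
  nf_cont : ∀ (δ : Ordinal.{u}) (f : Ordinal.{u} → L.Substructure U)
      (N : L.Substructure U) (a : U), Order.IsSuccLimit δ →
    (∀ α β, α ≤ β → β ≤ δ → strong (f α) (f β)) →
    (∀ β ≤ δ, Order.IsSuccLimit β → f β = osup f β) →
    strong (f δ) N → a ∈ N →
    (∀ α < δ, NFrel (f 0) (f α) N a) →
    NFrel (f 0) (f δ) N a

/-- The order `≼_bs` on basic triples: `(M, N, a) ≼_bs (M', N', a)` iff `M ≼ M'`,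
`N ≼ N'` and `tp(a, M', N')` does not fork over `M`. -/
def BsLe (s : FrameNoLC L U) (M N M' N' : L.Substructure U) (a : U) : Prop :=
  s.strong M M' ∧ s.strong N N' ∧ s.NFrel M M' N' a

/-!
Reflexivity is existence of nonforking (a basic type does not fork over its own domain), and
transitivity of `≼_bs` is transitivity of nonforking: by uniqueness, applied twice, `tp(a, M'', N'')`
agrees with the nonforking extension of `tp(a, M, N'')` to `M''`. For the union of a
`≼_bs`-chain `(M_α, N_α, a)`, the continuity axiom, applied to the chain `M_α` capped by its union,
shows that `tp(a, ⋃ M_α, ⋃ N_α)` does not fork over `M_0`; in particular it is basic. The remaining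
axioms come from those of `(K, ≼)` and monotonicity of nonforking.
-/

lemma osup_congr {f g : Ordinal.{u} → L.Substructure U} {δ : Ordinal.{u}}
    (h : ∀ γ < δ, f γ = g γ) : osup f δ = osup g δ :=
  iSup_congr fun γ => h γ.1 γ.2

noncomputable def withUnion (f : Ordinal.{u} → L.Substructure U) (δ : Ordinal.{u}) :
    Ordinal.{u} → L.Substructure U :=
  fun β => if β < δ then f β else osup f δ

section withUnion

variable {f : Ordinal.{u} → L.Substructure U} {δ β : Ordinal.{u}}

lemma withUnion_of_lt (h : β < δ) : withUnion f δ β = f β := if_pos h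

lemma withUnion_self : withUnion f δ δ = osup f δ := if_neg (lt_irrefl δ)

lemma osup_withUnion (h : β ≤ δ) : osup (withUnion f δ) β = osup f β :=
  osup_congr fun _ hγ => withUnion_of_lt (lt_of_lt_of_le hγ h)

lemma withUnion_continuous (hcont : ∀ β < δ, Order.IsSuccLimit β → f β = osup f β) :
    ∀ β ≤ δ, Order.IsSuccLimit β → withUnion f δ β = osup (withUnion f δ) β := by
  intro β hβδ hβ
  rw [osup_withUnion hβδ]
  rcases hβδ.lt_or_eq with hlt | rfl
  · rw [withUnion_of_lt hlt]
    exact hcont β hlt hβ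
  · exact withUnion_self

end withUnion

namespace AEC

variable (A : AEC L U) {M N : L.Substructure U}

lemma strong_refl_left (h : A.strong M N) : A.strong M M := A.strong_refl (A.strong_mem_left h)

lemma strong_refl_right (h : A.strong M N) : A.strong N N :=
  A.strong_refl (A.strong_mem_right h)

lemma strong_withUnion {f : Ordinal.{u} → L.Substructure U} {δ : Ordinal.{u}}
    (hδ : Order.IsSuccLimit δ) (hmono : ∀ α β, α ≤ β → β < δ → A.strong (f α) (f β))
    (hcont : ∀ β < δ, Order.IsSuccLimit β → f β = osup f β) :
    ∀ α β, α ≤ β → β ≤ δ → A.strong (withUnion f δ α) (withUnion f δ β) := by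
  obtain ⟨hK, hstrong⟩ := A.chain_closed δ f hδ hmono hcont
  intro α β hαβ hβδ
  rcases hβδ.lt_or_eq with hβ | rfl
  · rw [withUnion_of_lt (hαβ.trans_lt hβ), withUnion_of_lt hβ]
    exact hmono α β hαβ hβ
  · rcases hαβ.lt_or_eq with hα | rfl
    · rw [withUnion_of_lt hα, withUnion_self]
      exact hstrong α hα
    · exact A.strong_refl (withUnion_self (f := f) ▸ hK)

end AEC

namespace FrameNoLC

variable {s : FrameNoLC L U} {M M' M'' M₀ M₀' M₁ M₁' N N' N'' : L.Substructure U} {a : U}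

lemma ne_of_bs (h : s.Bs M N a) : M ≠ N := by
  obtain ⟨-, -, -, haN, haM⟩ := s.bs_spec h
  exact fun e => haM (e ▸ haN)

lemma NFrel.mono_base (h : s.NFrel M₀ M₁ N a) (h₀ : s.strong M₀ M₀') (h₁ : s.strong M₀' M₁) :
    s.NFrel M₀' M₁ N a := by
  obtain ⟨hM₁N, -, -, haN, -⟩ := s.bs_spec (s.nf_spec h).2.2
  exact s.nf_mono h h₀ h₁ (s.strong_refl_left hM₁N) (s.strong_refl_right hM₁N) hM₁N
    (s.strong_refl_right hM₁N) haN

lemma NFrel.mono_mid (h : s.NFrel M₀ M₁ N a) (h₀ : s.strong M₀ M₁') (h₁ : s.strong M₁' M₁) :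
    s.NFrel M₀ M₁' N a := by
  obtain ⟨hM₁N, -, -, haN, -⟩ := s.bs_spec (s.nf_spec h).2.2
  exact s.nf_mono h (s.strong_refl_left h₀) h₀ h₁ (s.strong_refl_right hM₁N)
    (s.strong_trans h₁ hM₁N) (s.strong_refl_right hM₁N) haN

lemma NFrel.mono_ambient (h : s.NFrel M₀ M₁ N a) (hN : s.strong N N') :
    s.NFrel M₀ M₁ N' a := by
  obtain ⟨hM₀M₁, -, hbs⟩ := s.nf_spec h
  obtain ⟨hM₁N, -, -, haN, -⟩ := s.bs_spec hbs
  exact s.nf_mono h (s.strong_refl_left hM₀M₁) hM₀M₁ (s.strong_refl_right hM₀M₁) hN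
    (s.strong_trans hM₁N hN) (s.strong_refl_right hN) (s.strong_le hN haN)

lemma nfrel_self_of_bs (h : s.Bs M N a) : s.NFrel M M N a := by
  obtain ⟨hMN, -, hN, haN, -⟩ := s.bs_spec h
  obtain ⟨N'', b, hnf, heq⟩ := s.nf_ext h hMN hN (ne_of_bs h)
  exact s.nf_inv (hnf.mono_mid (s.strong_refl_left hMN) hMN) heq.symm hMN haN

lemma NFrel.trans (h : s.NFrel M M' N'' a) (h' : s.NFrel M' M'' N'' a) :
    s.NFrel M M'' N'' a := by
  obtain ⟨hMM', hbs, -⟩ := s.nf_spec h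
  obtain ⟨hM'M'', -, hbs''⟩ := s.nf_spec h'
  obtain ⟨hM''N'', hM'', -, haN'', -⟩ := s.bs_spec hbs''
  by_cases hM : M = M''
  · subst hM
    exact h.mono_mid (s.strong_refl_left hMM') hMM'
  obtain ⟨Nq, b, hq, heq⟩ := s.nf_ext hbs (s.strong_trans hMM' hM'M'') hM'' hM
  have heq' := s.nf_unique h (hq.mono_mid hMM' hM'M'') heq
  have heq'' := s.nf_unique h' (hq.mono_base hMM' hM'M'') heq'
  exact s.nf_inv hq heq''.symm hM''N'' haN''

lemma nfrel_osup {f : Ordinal.{u} → L.Substructure U} {δ : Ordinal.{u}}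
    (hδ : Order.IsSuccLimit δ) (hmono : ∀ α β, α ≤ β → β < δ → s.strong (f α) (f β))
    (hcont : ∀ β < δ, Order.IsSuccLimit β → f β = osup f β) (hN : s.strong (osup f δ) N)
    (haN : a ∈ N) (hnf : ∀ α < δ, s.NFrel (f 0) (f α) N a) :
    s.NFrel (f 0) (osup f δ) N a := by
  have h0 : withUnion f δ 0 = f 0 := withUnion_of_lt hδ.pos
  have key := s.nf_cont δ (withUnion f δ) N a hδ (s.strong_withUnion hδ hmono hcont)
    (withUnion_continuous hcont) (withUnion_self (f := f) ▸ hN) haN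
    fun α hα => by rw [h0, withUnion_of_lt hα]; exact hnf α hα
  rwa [h0, withUnion_self] at key

end FrameNoLC

section BsLe

variable {s : FrameNoLC L U} {M M' M'' N N' N'' : L.Substructure U} {a : U}

lemma bsLe_refl (h : s.Bs M N a) : BsLe s M N M N a :=
  have hMN := (s.bs_spec h).1
  ⟨s.strong_refl_left hMN, s.strong_refl_right hMN, FrameNoLC.nfrel_self_of_bs h⟩

lemma BsLe.trans (h : BsLe s M N M' N' a) (h' : BsLe s M' N' M'' N'' a) :
    BsLe s M N M'' N'' a :=
  ⟨s.strong_trans h.1 h'.1, s.strong_trans h.2.1 h'.2.1, (h.2.2.mono_ambient h'.2.1).trans h'.2.2⟩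

lemma BsLe.le (h : BsLe s M N M' N' a) : M ≤ M' ∧ N ≤ N' :=
  ⟨s.strong_le h.1, s.strong_le h.2.1⟩

lemma BsLe.antisymm (h : BsLe s M N M' N' a) (h' : BsLe s M' N' M N a) : M = M' ∧ N = N' :=
  ⟨le_antisymm h.le.1 h'.le.1, le_antisymm h.le.2 h'.le.2⟩

lemma bsLe_coherence (hbs' : s.Bs M' N' a) (hM : M ≤ M') (hN : N ≤ N')
    (h' : BsLe s M' N' M'' N'' a) (h : BsLe s M N M'' N'' a) : BsLe s M N M' N' a := by
  have hMM' := s.coherence hM h.1 h'.1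
  obtain ⟨hM'N', -, -, haN', -⟩ := s.bs_spec hbs'
  refine ⟨hMM', s.coherence hN h.2.1 h'.2.1, ?_⟩
  exact s.nf_mono (h.2.2.mono_mid hMM' h'.1) (s.strong_refl_left hMM') hMM'
    (s.strong_refl_right hMM') (s.strong_refl_right h'.2.1) hM'N' h'.2.1 haN'

variable {fM fN : Ordinal.{u} → L.Substructure U} {δ : Ordinal.{u}}

lemma bs_osup_and_bsLe_osup (hδ : Order.IsSuccLimit δ)
    (hle : ∀ α β, α ≤ β → β < δ → BsLe s (fM α) (fN α) (fM β) (fN β) a)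
    (hcont : ∀ β < δ, Order.IsSuccLimit β → fM β = osup fM β ∧ fN β = osup fN β) :
    s.Bs (osup fM δ) (osup fN δ) a ∧
      ∀ α < δ, BsLe s (fM α) (fN α) (osup fM δ) (osup fN δ) a := by
  have hM α β hαβ hβ : s.strong (fM α) (fM β) := (hle α β hαβ hβ).1
  have hN α β hαβ hβ : s.strong (fN α) (fN β) := (hle α β hαβ hβ).2.1
  have cM β hβ hl : fM β = osup fM β := (hcont β hβ hl).1
  have cN β hβ hl : fN β = osup fN β := (hcont β hβ hl).2
  obtain ⟨-, hMδ⟩ := s.chain_closed δ fM hδ hM cM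
  obtain ⟨-, hNδ⟩ := s.chain_closed δ fN hδ hN cN
  have hbs α (hα : α < δ) : s.Bs (fM α) (fN α) a := (s.nf_spec (hle α α le_rfl hα).2.2).2.2
  have hMN : s.strong (osup fM δ) (osup fN δ) :=
    s.smooth δ fM _ hδ hM cM fun α hα => s.strong_trans (s.bs_spec (hbs α hα)).1 (hNδ α hα)
  have ha : a ∈ osup fN δ := s.strong_le (hNδ 0 hδ.pos) (s.bs_spec (hbs 0 hδ.pos)).2.2.2.1
  have hnf : s.NFrel (fM 0) (osup fM δ) (osup fN δ) a :=
    FrameNoLC.nfrel_osup hδ hM cM hMN ha fun α hα =>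
      (hle 0 α (zero_le (a := α)) hα).2.2.mono_ambient (hNδ α hα)
  exact ⟨(s.nf_spec hnf).2.2, fun α hα =>
    ⟨hMδ α hα, hNδ α hα, hnf.mono_base (hM 0 α (zero_le (a := α)) hα) (hMδ α hα)⟩⟩

lemma bsLe_of_forall_bsLe (hδ : Order.IsSuccLimit δ)
    (hle : ∀ α β, α ≤ β → β < δ → BsLe s (fM α) (fN α) (fM β) (fN β) a)
    (hcont : ∀ β < δ, Order.IsSuccLimit β → fM β = osup fM β ∧ fN β = osup fN β)
    (hleT : ∀ α < δ, BsLe s (fM α) (fN α) M' N' a) : BsLe s (osup fM δ) (osup fN δ) M' N' a := by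
  have hM α β hαβ hβ : s.strong (fM α) (fM β) := (hle α β hαβ hβ).1
  have hN α β hαβ hβ : s.strong (fN α) (fN β) := (hle α β hαβ hβ).2.1
  have cM β hβ hl : fM β = osup fM β := (hcont β hβ hl).1
  have cN β hβ hl : fN β = osup fN β := (hcont β hβ hl).2
  obtain ⟨-, hMδ⟩ := s.chain_closed δ fM hδ hM cM
  have hMM' := s.smooth δ fM M' hδ hM cM fun α hα => (hleT α hα).1
  exact ⟨hMM', s.smooth δ fN N' hδ hN cN fun α hα => (hleT α hα).2.1,
    (hleT 0 hδ.pos).2.2.mono_base (hMδ 0 hδ.pos) hMM'⟩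

lemma exists_bsLe_ne (h : s.Bs M N a) :
    ∃ M' N', s.Bs M' N' a ∧ BsLe s M N M' N' a ∧ (M ≠ M' ∨ N ≠ N') := by
  obtain ⟨hMN, -, hN, -, -⟩ := s.bs_spec h
  obtain ⟨N', hNN', -, hne⟩ := s.no_max N (s.strong_mem_right hMN) hN
  have hnf := (FrameNoLC.nfrel_self_of_bs h).mono_ambient hNN'
  exact ⟨M, N', (s.nf_spec hnf).2.2, ⟨s.strong_refl_left hMN, hNN', hnf⟩, Or.inr hne⟩

end BsLe

/-- In a semi-good `λ`-frame except possibly local character, the class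
`K^{3,bs}` of basic triples with the order `≼_bs` is an abstract elementary class in `λ`
(partial order contained in inclusion, coherence, closure under unions of increasing
continuous chains of length `< λ⁺`, smoothness) with no `≼_bs`-maximal element. -/
theorem Kbs_is_aec_in_lambda (s : FrameNoLC L U) :
    -- reflexivity
    (∀ M N a, s.Bs M N a → BsLe s M N M N a) ∧
    -- transitivity
    (∀ M N M' N' M'' N'' a, s.Bs M N a → BsLe s M N M' N' a →
        BsLe s M' N' M'' N'' a → BsLe s M N M'' N'' a) ∧
    -- antisymmetry
    (∀ M N M' N' a, BsLe s M N M' N' a → BsLe s M' N' M N a → M = M' ∧ N = N') ∧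
    -- contained in the inclusion relation
    (∀ M N M' N' a, s.Bs M N a → BsLe s M N M' N' a → M ≤ M' ∧ N ≤ N') ∧
    -- coherence (axiom (e))
    (∀ M N M' N' M'' N'' a, s.Bs M N a → s.Bs M' N' a →
        M ≤ M' → N ≤ N' → BsLe s M' N' M'' N'' a → BsLe s M N M'' N'' a →
        BsLe s M N M' N' a) ∧
    -- closure under unions of `≼_bs`-increasing continuous chains of length `< λ⁺`
    (∀ (δ : Ordinal.{u}) (fM fN : Ordinal.{u} → L.Substructure U) (a : U),
        Order.IsSuccLimit δ → δ < (Order.succ s.lam).ord →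
        (∀ α < δ, s.Bs (fM α) (fN α) a) →
        (∀ α β, α ≤ β → β < δ → BsLe s (fM α) (fN α) (fM β) (fN β) a) →
        (∀ β < δ, Order.IsSuccLimit β → fM β = osup fM β ∧ fN β = osup fN β) →
        s.Bs (osup fM δ) (osup fN δ) a ∧
          ∀ α < δ, BsLe s (fM α) (fN α) (osup fM δ) (osup fN δ) a) ∧
    -- smoothness
    (∀ (δ : Ordinal.{u}) (fM fN : Ordinal.{u} → L.Substructure U)
        (Mt Nt : L.Substructure U) (a : U),
        Order.IsSuccLimit δ → δ < (Order.succ s.lam).ord →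
        (∀ α < δ, s.Bs (fM α) (fN α) a) →
        (∀ α β, α ≤ β → β < δ → BsLe s (fM α) (fN α) (fM β) (fN β) a) →
        (∀ β < δ, Order.IsSuccLimit β → fM β = osup fM β ∧ fN β = osup fN β) →
        s.Bs Mt Nt a →
        (∀ α < δ, BsLe s (fM α) (fN α) Mt Nt a) →
        BsLe s (osup fM δ) (osup fN δ) Mt Nt a) ∧
    -- no `≼_bs`-maximal element
    (∀ M N a, s.Bs M N a → ∃ M' N', s.Bs M' N' a ∧ BsLe s M N M' N' a ∧
        (M ≠ M' ∨ N ≠ N')) :=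
  ⟨fun _ _ _ => bsLe_refl, fun _ _ _ _ _ _ _ _ h h' => h.trans h',
    fun _ _ _ _ _ => BsLe.antisymm, fun _ _ _ _ _ _ => BsLe.le,
    fun _ _ _ _ _ _ _ _ => bsLe_coherence,
    fun _ _ _ _ hδ _ _ hle hcont => bs_osup_and_bsLe_osup hδ hle hcont,
    fun _ _ _ _ _ _ hδ _ _ hle hcont _ hleT => bsLe_of_forall_bsLe hδ hle hcont hleT,
    fun _ _ _ => exists_bsLe_ne⟩
end

section
/- Let 𝔰 be a semi-good λ-frame except local character. Suppose M₀ ≼ M₁ ≼ M₂ are models of cardinality ≥ λ, p ∈ S^bs_{≥λ}(M₂) does not fork over M₁, and p↾M₁ does not fork over M₀. Then p does not fork over M₀ (transitivity of the lifted nonforking relation). -/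
open FirstOrder Cardinal Set

universe u

variable {L : FirstOrder.Language.{u, u}} {U : Type u} [L.Structure U]

/-- `tp(a, N₁, Mbig)` does not fork over `N₀` (where `Mbig` may be large), witnessed
inside a small model: there is `N₂ ∈ K_λ` with `N₁ ≼ N₂ ≼ Mbig`, `a ∈ N₂` and
`tp(a, N₁, N₂)` not forking over `N₀`. -/
def NFat (s : FrameNoLC L U) (N₀ N₁ Mbig : L.Substructure U) (a : U) : Prop :=
  ∃ N₂ : L.Substructure U, s.strong N₁ N₂ ∧ s.strong N₂ Mbig ∧ a ∈ N₂ ∧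
    s.NFrel N₀ N₁ N₂ a

/-- `tp(a, M₁, M₂)` does not fork over the small model `N₀ ∈ K_λ`, `N₀ ≼ M₁`
(Definition 2.9): every intermediate small model witnesses nonforking over `N₀`. -/
def NFgeOver (s : FrameNoLC L U) (N₀ M₁ M₂ : L.Substructure U) (a : U) : Prop :=
  s.strong N₀ M₁ ∧ #↥N₀ = s.lam ∧
    ∀ N : L.Substructure U, #↥N = s.lam → s.strong N₀ N → s.strong N M₁ →
      NFat s N₀ N M₂ a

/-- `tp(a, M₁, M₂)` does not fork over `M₀` for models of cardinality `≥ λ`. -/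
def NFgeBig (s : FrameNoLC L U) (M₀ M₁ M₂ : L.Substructure U) (a : U) : Prop :=
  s.strong M₀ M₁ ∧
    ∃ N₀ : L.Substructure U, #↥N₀ = s.lam ∧ s.strong N₀ M₀ ∧ NFgeOver s N₀ M₁ M₂ a

/-- `tp(a, M, N)` is a basic type over the (possibly large) model `M`, i.e. it does not
fork over some submodel of `M` of cardinality `λ`. -/
def BsGe (s : FrameNoLC L U) (M N : L.Substructure U) (a : U) : Prop :=
  ∃ N₀ : L.Substructure U, NFgeOver s N₀ M N a

/-!
Let `N₀ ≼ M₀` and `N₁ ≼ M₁` be the small models witnessing the two hypotheses, and let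
`N₀ ≼ N' ≼ M₂` be small. By `LST ≤ λ` there are small `Ns ≼ M₁` above `N₀` and `N₁`, and small
`M ≼ M₂` above `N'` and `Ns`. Then `p↾M` does not fork over `Ns` and `p↾Ns` does not fork over
`N₀`, so by transitivity inside `K_λ` the type `p↾M`, hence `p↾N'`, does not fork over `N₀`.

Transitivity inside `K_λ`, for `N₀ ≼ N₁ ≼ N₂`, comes from existence and uniqueness: the
extension of `p↾N₁` to `N₂` not forking over `N₀` also does not fork over `N₁`, and it agrees
with `p` over `N₁` by uniqueness over `N₀`, so by uniqueness over `N₁` it is `p↾N₂`.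
-/

namespace FrameNoLC

variable {s : FrameNoLC L U}

theorem exists_small_strong_upper_bound {P Q Mbig : L.Substructure U}
    (hP : s.strong P Mbig) (hQ : s.strong Q Mbig) (hcP : #P = s.lam) (hcQ : #Q = s.lam) :
    ∃ M : L.Substructure U, s.strong P M ∧ s.strong Q M ∧ s.strong M Mbig ∧ #M = s.lam := by
  obtain ⟨M, -, hsub, hMbig, hcard⟩ := s.lst_prop Mbig (s.strong_mem_right hP)
    ((P : Set U) ∪ Q) (union_subset (s.strong_le hP) (s.strong_le hQ))
  have hPM : P ≤ M := subset_union_left.trans hsub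
  have hQM : Q ≤ M := subset_union_right.trans hsub
  refine ⟨M, s.coherence hPM hP hMbig, s.coherence hQM hQ hMbig, hMbig, le_antisymm ?_ ?_⟩
  · calc #M ≤ s.lst + #↥((P : Set U) ∪ Q) := hcard
      _ ≤ s.lam + (#P + #Q) := add_le_add s.lst_le (mk_union_le (P : Set U) Q)
      _ = s.lam := by rw [hcP, hcQ, add_eq_self s.lam_inf, add_eq_self s.lam_inf]
  · exact hcP ▸ mk_le_mk_of_subset (show (P : Set U) ⊆ M from hPM)

theorem typeEq_of_common_strong_extension {N₀ P Q Nbig : L.Substructure U} {a : U}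
    (h0P : s.strong N₀ P) (h0Q : s.strong N₀ Q) (hP : s.strong P Nbig) (hQ : s.strong Q Nbig)
    (haP : a ∈ P) (haQ : a ∈ Q) :
    s.TypeEq N₀ (P, a) (Q, a) :=
  .rel _ _ ⟨h0P, h0Q, haP, haQ, Nbig, hQ, id, ⟨P, .refl L P, hP, fun _ => rfl⟩,
    fun _ _ => rfl, rfl⟩

namespace NFrel

variable {N₀ N₁ N₂ N₃ : L.Substructure U} {a : U}

theorem mono {N₀' : L.Substructure U} (h : s.NFrel N₀ N₂ N₃ a) (h₀ : s.strong N₀ N₀')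
    (h₀₁ : s.strong N₀' N₁) (h₁₂ : s.strong N₁ N₂) :
    s.NFrel N₀' N₁ N₃ a := by
  obtain ⟨h₂₃, -, -, ha, -⟩ := s.bs_spec (s.nf_spec h).2.2
  have h₃ := s.strong_refl (s.strong_mem_right h₂₃)
  exact s.nf_mono h h₀ h₀₁ h₁₂ h₃ (s.strong_trans h₁₂ h₂₃) h₃ ha

theorem of_common_strong_extension {P Nbig : L.Substructure U} (h : s.NFrel N₀ N₁ P a)
    (h₁₃ : s.strong N₁ N₃) (ha : a ∈ N₃) (hP : s.strong P Nbig) (h₃ : s.strong N₃ Nbig) :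
    s.NFrel N₀ N₁ N₃ a := by
  obtain ⟨h₁P, -, -, haP, -⟩ := s.bs_spec (s.nf_spec h).2.2
  exact s.nf_inv h (typeEq_of_common_strong_extension h₁P h₁₃ hP h₃ haP ha) h₁₃ ha

theorem trans_s9 (h₀₁ : s.NFrel N₀ N₁ N₃ a) (h₁₂ : s.NFrel N₁ N₂ N₃ a) :
    s.NFrel N₀ N₂ N₃ a := by
  have hs₀₁ := (s.nf_spec h₀₁).1
  have hs₁₂ := (s.nf_spec h₁₂).1
  by_cases h₀₂ : N₀ = N₂
  · subst h₀₂
    have : N₁ = N₀ := le_antisymm (s.strong_le hs₁₂) (s.strong_le hs₀₁)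
    exact this ▸ h₁₂
  have hc₂ := (s.bs_spec (s.nf_spec h₁₂).2.2).2.1
  obtain ⟨N'', b, hb, hab⟩ :=
    s.nf_ext (s.nf_spec h₀₁).2.1 (s.strong_trans hs₀₁ hs₁₂) hc₂ h₀₂
  have hb₁ : s.TypeEq N₁ (N₃, a) (N'', b) :=
    s.nf_unique h₀₁ (hb.mono (s.strong_refl (s.strong_mem_left hs₀₁)) hs₀₁ hs₁₂) hab
  have hb₂ : s.TypeEq N₂ (N'', b) (N₃, a) :=
    s.nf_unique (hb.mono hs₀₁ hs₁₂ (s.strong_refl (s.strong_mem_right hs₁₂))) h₁₂ (.symm _ _ hb₁)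
  obtain ⟨h₂₃, -, -, ha, -⟩ := s.bs_spec (s.nf_spec h₁₂).2.2
  exact s.nf_inv hb hb₂ h₂₃ ha

end NFrel

end FrameNoLC

theorem NFgeOver.trans_s9 {s : FrameNoLC L U} {N₀ N₁ M₁ M₂ N : L.Substructure U} {a : U}
    (h₀ : NFgeOver s N₀ M₁ N a) (h₁ : NFgeOver s N₁ M₂ N a) (hN₁ : s.strong N₁ M₁)
    (h₁₂ : s.strong M₁ M₂) :
    NFgeOver s N₀ M₂ N a := by
  obtain ⟨hN₀, hc₀, hnf₀⟩ := h₀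
  obtain ⟨-, hc₁, hnf₁⟩ := h₁
  refine ⟨s.strong_trans hN₀ h₁₂, hc₀, fun N' hc' hN₀N' hN'M₂ => ?_⟩
  obtain ⟨Ns, hN₀Ns, hN₁Ns, hNsM₁, hcNs⟩ :=
    FrameNoLC.exists_small_strong_upper_bound hN₀ hN₁ hc₀ hc₁
  obtain ⟨M, hN'M, hNsM, hMM₂, hcM⟩ :=
    FrameNoLC.exists_small_strong_upper_bound hN'M₂ (s.strong_trans hNsM₁ h₁₂) hc' hcNs
  obtain ⟨P, -, hPN, -, hnfP⟩ := hnf₀ Ns hcNs hN₀Ns hNsM₁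
  obtain ⟨Q, hMQ, hQN, haQ, hnfQ⟩ := hnf₁ M hcM (s.strong_trans hN₁Ns hNsM) hMM₂
  have hnfNs : s.NFrel N₀ Ns Q a :=
    hnfP.of_common_strong_extension (s.strong_trans hNsM hMQ) haQ hPN hQN
  have hnfM : s.NFrel N₀ M Q a :=
    hnfNs.trans_s9 (hnfQ.mono hN₁Ns hNsM (s.strong_refl (s.strong_mem_left hMQ)))
  exact ⟨Q, s.strong_trans hN'M hMQ, hQN, haQ,
    hnfM.mono (s.strong_refl (s.strong_mem_left hN₀N')) hN₀N' hN'M⟩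

theorem transitivity_of_lifted_nonforking_general (s : FrameNoLC L U)
    (M₀ M₁ M₂ N : L.Substructure U) (a : U)
    (h01 : s.strong M₀ M₁) (h12 : s.strong M₁ M₂)
    (hp1 : NFgeBig s M₁ M₂ N a) (hp0 : NFgeBig s M₀ M₁ N a) :
    NFgeBig s M₀ M₂ N a := by
  obtain ⟨-, N₁, -, hN₁M₁, hp1⟩ := hp1
  obtain ⟨-, N₀, hc₀, hN₀M₀, hp0⟩ := hp0
  exact ⟨s.strong_trans h01 h12, N₀, hc₀, hN₀M₀, hp0.trans_s9 hp1 hN₁M₁ h12⟩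

/-- (Transitivity of the lifted nonforking relation.) In a semi-good
`λ`-frame except local character: if `M₀ ≼ M₁ ≼ M₂` are models of cardinality `≥ λ`,
`p = tp(a, M₂, N) ∈ S^{bs}_{≥λ}(M₂)` does not fork over `M₁`, and `p↾M₁` does not fork
over `M₀`, then `p` does not fork over `M₀`. -/
theorem transitivity_of_lifted_nonforking (s : FrameNoLC L U)
    (M₀ M₁ M₂ N : L.Substructure U) (a : U)
    (hc₀ : s.lam ≤ #↥M₀) (hc₁ : s.lam ≤ #↥M₁) (hc₂ : s.lam ≤ #↥M₂)
    (h01 : s.strong M₀ M₁) (h12 : s.strong M₁ M₂)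
    (hN : s.strong M₂ N) (ha : a ∈ N) (ha' : a ∉ M₂)
    (hbs : BsGe s M₂ N a)
    (hp1 : NFgeBig s M₁ M₂ N a) (hp0 : NFgeBig s M₀ M₁ N a) :
    NFgeBig s M₀ M₂ N a :=
  transitivity_of_lifted_nonforking_general s M₀ M₁ M₂ N a h01 h12 hp1 hp0
end
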